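/- arXiv:2312.07269 — 2 statements merged into one kernel-verified Lean document; each statement's English description precedes it below -/
import Mathlib

section
/- Let U be an invertible symmetric d×d joint distribution matrix with marginal row vector q = 1ᵀU (i.e., q_t = Σ_s U_{s,t}), and let M be an invertible d×d row-stochastic matrix. Define Û = Mᵀ U M, ŵ = wM, and q̂ = qM. Then (ŵ - q̂) Û⁻¹ (ŵ - q̂)ᵀ = (w - q) U⁻¹ (w - q)ᵀ; i.e., the quadratic-form surprisal Sur(w,U) = (w-q)U⁻¹(w-q)ᵀ is invariant under any invertible noise. -/
open scoped Matrix
/-- The quadratic-form surprisal `(w-q) U⁻¹ (w-q)ᵀ` is invariant under any invertible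
row-stochastic noise `M`: with `Û = Mᵀ U M`, `ŵ = w M`, `q̂ = q M`, we have
`(ŵ-q̂) Û⁻¹ (ŵ-q̂)ᵀ = (w-q) U⁻¹ (w-q)ᵀ`. -/
theorem stmt_4 (d : ℕ) (U M : Matrix (Fin d) (Fin d) ℝ)
    (hUsymm : U.transpose = U) (hUinv : IsUnit U.det)
    (q : Fin d → ℝ) (hq : ∀ t, q t = ∑ s, U s t)
    (hM0 : ∀ i j, 0 ≤ M i j) (hM1 : ∀ i, ∑ j, M i j = 1) (hMinv : IsUnit M.det)
    (w : Fin d → ℝ)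
    (Uhat : Matrix (Fin d) (Fin d) ℝ) (hUhat : Uhat = M.transpose * U * M)
    (what qhat : Fin d → ℝ)
    (hwhat : what = Matrix.vecMul w M) (hqhat : qhat = Matrix.vecMul q M) :
    Matrix.vecMul (what - qhat) Uhat⁻¹ ⬝ᵥ (what - qhat)
      = Matrix.vecMul (w - q) U⁻¹ ⬝ᵥ (w - q) := by
  have hMTinv : IsUnit M.transpose.det := by rwa [Matrix.det_transpose]
  have hsub : what - qhat = Matrix.vecMul (w - q) M := by
    rw [hwhat, hqhat, Matrix.sub_vecMul]
  have hinv : Uhat⁻¹ = M⁻¹ * (U⁻¹ * M.transpose⁻¹) := by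
    rw [hUhat, Matrix.mul_inv_rev, Matrix.mul_inv_rev]
  rw [hsub, hinv, Matrix.vecMul_vecMul, ← Matrix.mul_assoc,
    Matrix.mul_nonsing_inv M hMinv, Matrix.one_mul,
    ← Matrix.dotProduct_mulVec, ← Matrix.dotProduct_mulVec,
    ← Matrix.mulVec_transpose M (w - q), Matrix.mulVec_mulVec,
    Matrix.mul_assoc, Matrix.nonsing_inv_mul M.transpose hMTinv, Matrix.mul_one]
end

section
/- Prior reconstruction from predictions: let U be a symmetric d×d joint distribution matrix with strictly positive entries and marginal q (q_s = Σ_t U_{s,t}), and let P_{s,t} = U_{s,t}/q_s. Then for every s, q_s = (Σ_t P_{s,t}/P_{t,s})⁻¹. -/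
/-- Prior reconstruction from predictions: for a symmetric joint distribution `U`
with positive entries, marginal `q` and prediction matrix `P s t = U s t / q s`,
we have `q s = (Σ_t P s t / P t s)⁻¹`. -/
theorem stmt_17 (d : ℕ) (U : Matrix (Fin d) (Fin d) ℝ)
    (hUsymm : U.transpose = U) (hU0 : ∀ s t, 0 < U s t)
    (hUsum : ∑ s, ∑ t, U s t = 1)
    (q : Fin d → ℝ) (hq : ∀ s, q s = ∑ t, U s t)
    (hqpos : ∀ s, 0 < q s)
    (P : Matrix (Fin d) (Fin d) ℝ) (hP : ∀ s t, P s t = U s t / q s) :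
    ∀ s, q s = (∑ t, P s t / P t s)⁻¹ := by
  intro s
  have hsym : ∀ a b, U a b = U b a := fun a b => by
    conv_lhs => rw [← hUsymm, Matrix.transpose_apply]
  have key : ∀ t, P s t / P t s = q t / q s := by
    intro t
    rw [hP, hP, hsym t s]
    have h1 := (hU0 s t).ne'
    have h2 := (hqpos s).ne'
    have h3 := (hqpos t).ne'
    field_simp
  have hsum : ∑ t, P s t / P t s = (q s)⁻¹ := by
    simp only [key, div_eq_mul_inv, ← Finset.sum_mul]
    have : ∑ t, q t = 1 := by
      simp only [hq]; exact hUsum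
    rw [this, one_mul]
  rw [hsum, inv_inv]
end
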